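/- Let X and Y be nonempty strings over an alphabet Σ with X[0] ≠ Y[0]. Then IDD(X[1..|X|), Y) ∈ {IDD(X,Y) − 1, IDD(X,Y) + 1} and IDD(X, Y[1..|Y|)) ∈ {IDD(X,Y) − 1, IDD(X,Y) + 1}; moreover, at least one of IDD(X[1..|X|), Y) = IDD(X,Y) − 1 and IDD(X, Y[1..|Y|)) = IDD(X,Y) − 1 holds. -/

import Mathlib

structure Levenshtein.Cost (α β δ : Type*) where
  delete : α → δ
  insert : β → δ
  substitute : α → β → δ

def Levenshtein.defaultCost {α : Type*} [DecidableEq α] : Levenshtein.Cost α α ℕ where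
  delete _ := 1
  insert _ := 1
  substitute a b := if a = b then 0 else 1

def levenshtein {α β δ : Type*} [AddZeroClass δ] [Min δ] (C : Levenshtein.Cost α β δ) :
    List α → List β → δ
  | [], [] => 0
  | [], y :: ys => C.insert y + levenshtein C [] ys
  | x :: xs, [] => C.delete x + levenshtein C xs []
  | x :: xs, y :: ys =>
    min (C.delete x + levenshtein C xs (y :: ys))
      (min (C.insert y + levenshtein C (x :: xs) ys) (C.substitute x y + levenshtein C xs ys))

section levenshteinEqns
variable {α β δ : Type*} [AddZeroClass δ] [Min δ] (C : Levenshtein.Cost α β δ)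

theorem levenshtein_nil_nil : levenshtein C [] [] = 0 := by rw [levenshtein]

theorem levenshtein_nil_cons (y : β) (ys : List β) :
    levenshtein C [] (y :: ys) = C.insert y + levenshtein C [] ys := by rw [levenshtein]

theorem levenshtein_cons_nil (x : α) (xs : List α) :
    levenshtein C (x :: xs) [] = C.delete x + levenshtein C xs [] := by rw [levenshtein]

theorem levenshtein_cons_cons (x : α) (xs : List α) (y : β) (ys : List β) :
    levenshtein C (x :: xs) (y :: ys) =
      min (C.delete x + levenshtein C xs (y :: ys))
        (min (C.insert y + levenshtein C (x :: xs) ys) (C.substitute x y + levenshtein C xs ys)) := by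
  rw [levenshtein]

end levenshteinEqns

/-- Edit (Levenshtein) distance: minimum number of insertions, deletions,
and substitutions transforming `X` into `Y`. -/
def ED {α : Type*} [DecidableEq α] (X Y : List α) : ℕ :=
  levenshtein Levenshtein.defaultCost X Y

/-- Indel distance: minimum number of insertions and deletions transforming `X` into `Y`
(substitutions are not allowed, i.e. a mismatched pair costs a deletion plus an insertion). -/
def IDD {α : Type*} [DecidableEq α] (X Y : List α) : ℕ :=
  levenshtein ⟨fun _ => 1, fun _ => 1, fun a b => if a = b then 0 else 2⟩ X Y

section helpers
variable {α : Type*} [DecidableEq α]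

lemma IDD_nil_right (X : List α) : IDD X [] = X.length := by
  induction X with
  | nil => simp [IDD, levenshtein_nil_nil]
  | cons x Xs ih =>
    simp only [IDD] at ih ⊢
    rw [levenshtein_cons_nil]
    simp [ih]
    omega

lemma IDD_nil_left (Y : List α) : IDD ([] : List α) Y = Y.length := by
  induction Y with
  | nil => simp [IDD, levenshtein_nil_nil]
  | cons y Ys ih =>
    simp only [IDD] at ih ⊢
    rw [levenshtein_nil_cons]
    simp [ih]
    omega

lemma IDD_cons_cons (x y : α) (Xs Ys : List α) :
    IDD (x :: Xs) (y :: Ys) =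
      min (1 + IDD Xs (y :: Ys))
        (min (1 + IDD (x :: Xs) Ys) ((if x = y then 0 else 2) + IDD Xs Ys)) := by
  simp only [IDD]
  rw [levenshtein_cons_cons]

lemma IDD_le_cons_right (X : List α) (y : α) (Ys : List α) :
    IDD X (y :: Ys) ≤ 1 + IDD X Ys := by
  cases X with
  | nil => rw [IDD_nil_left, IDD_nil_left]; simp only [List.length_cons]; omega
  | cons x Xs =>
    rw [IDD_cons_cons]
    exact le_trans (min_le_right _ _) (min_le_left _ _)

lemma IDD_le_cons_left (x : α) (Xs Ys : List α) :
    IDD (x :: Xs) Ys ≤ 1 + IDD Xs Ys := by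
  cases Ys with
  | nil => rw [IDD_nil_right, IDD_nil_right]; simp only [List.length_cons]; omega
  | cons y Ys =>
    rw [IDD_cons_cons]
    exact min_le_left _ _

lemma IDD_cons_le_right (X : List α) (y : α) (Ys : List α) :
    IDD X Ys ≤ 1 + IDD X (y :: Ys) := by
  induction X generalizing y Ys with
  | nil => rw [IDD_nil_left, IDD_nil_left]; simp only [List.length_cons]; omega
  | cons x Xs ih =>
    rw [IDD_cons_cons x y Xs Ys]
    have h1 : IDD (x :: Xs) Ys ≤ 1 + (1 + IDD Xs (y :: Ys)) := by
      have := IDD_le_cons_left x Xs Ys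
      have := ih y Ys
      omega
    have h2 : IDD (x :: Xs) Ys ≤ 1 + (1 + IDD (x :: Xs) Ys) := by omega
    have h3 : IDD (x :: Xs) Ys ≤ 1 + ((if x = y then 0 else 2) + IDD Xs Ys) := by
      have := IDD_le_cons_left x Xs Ys
      split <;> omega
    omega

lemma IDD_cons_le_left (x : α) (Xs Ys : List α) :
    IDD Xs Ys ≤ 1 + IDD (x :: Xs) Ys := by
  induction Ys generalizing x Xs with
  | nil => rw [IDD_nil_right, IDD_nil_right]; simp only [List.length_cons]; omega
  | cons y Ys ih =>
    rw [IDD_cons_cons x y Xs Ys]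
    have h1 : IDD Xs (y :: Ys) ≤ 1 + (1 + IDD Xs (y :: Ys)) := by omega
    have h2 : IDD Xs (y :: Ys) ≤ 1 + (1 + IDD (x :: Xs) Ys) := by
      have := IDD_le_cons_right Xs y Ys
      have := ih x Xs
      omega
    have h3 : IDD Xs (y :: Ys) ≤ 1 + ((if x = y then 0 else 2) + IDD Xs Ys) := by
      have := IDD_le_cons_right Xs y Ys
      split <;> omega
    omega

lemma IDD_parity (X Y : List α) : (IDD X Y + X.length + Y.length) % 2 = 0 := by
  induction X generalizing Y with
  | nil => rw [IDD_nil_left]; simp; omega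
  | cons x Xs ihX =>
    induction Y with
    | nil => rw [IDD_nil_right]; simp; omega
    | cons y Ys ihY =>
      rw [IDD_cons_cons]
      have hA := ihX (y :: Ys)
      have hB := ihY
      have hC := ihX Ys
      simp only [List.length_cons] at *
      split <;> omega

end helpers

theorem stmt12 {α : Type*} [DecidableEq α] (x y : α) (Xs Ys : List α) (hxy : x ≠ y) :
    ((IDD Xs (y :: Ys) : ℤ) = (IDD (x :: Xs) (y :: Ys) : ℤ) - 1 ∨
     (IDD Xs (y :: Ys) : ℤ) = (IDD (x :: Xs) (y :: Ys) : ℤ) + 1) ∧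
    ((IDD (x :: Xs) Ys : ℤ) = (IDD (x :: Xs) (y :: Ys) : ℤ) - 1 ∨
     (IDD (x :: Xs) Ys : ℤ) = (IDD (x :: Xs) (y :: Ys) : ℤ) + 1) ∧
    ((IDD Xs (y :: Ys) : ℤ) = (IDD (x :: Xs) (y :: Ys) : ℤ) - 1 ∨
     (IDD (x :: Xs) Ys : ℤ) = (IDD (x :: Xs) (y :: Ys) : ℤ) - 1) := by
  have hrec := IDD_cons_cons x y Xs Ys
  rw [if_neg hxy] at hrec
  have hsub : IDD Xs (y :: Ys) ≤ 1 + IDD Xs Ys := IDD_le_cons_right Xs y Ys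
  have hA1 : IDD Xs (y :: Ys) ≤ 1 + IDD (x :: Xs) (y :: Ys) := IDD_cons_le_left x Xs (y :: Ys)
  have hB1 : IDD (x :: Xs) Ys ≤ 1 + IDD (x :: Xs) (y :: Ys) := IDD_cons_le_right (x :: Xs) y Ys
  have hpA := IDD_parity Xs (y :: Ys)
  have hpB := IDD_parity (x :: Xs) Ys
  have hpD := IDD_parity (x :: Xs) (y :: Ys)
  simp only [List.length_cons] at hpA hpB hpD
  -- hrec: D = min (1+A) (min (1+B) (2+C)), with A ≤ 1+C so D = 1 + min A B
  have hD : IDD (x :: Xs) (y :: Ys) = min (1 + IDD Xs (y :: Ys)) (1 + IDD (x :: Xs) Ys) := by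
    rw [hrec]; omega
  rw [min_def] at hD
  split at hD <;>
  · refine ⟨?_, ?_, ?_⟩ <;> omega
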